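/- Let n ≥ 1 be a natural number, m > 0, ε > 0, and let α > 1 be a real number. Set λ := 2m/((n+1)·ε). Let y_1, …, y_{n+1} ∈ ℝ, and writing clamp(y) := max(−m, min(y, m)), set M := (1/n)·Σ_{i=1}^{n} clamp(y_i) and M' := (1/(n+1))·Σ_{i=1}^{n+1} clamp(y_i). Then (α−1)⁻¹·ln ∫_ℝ ℓ_{M,λ}(x)^α · ℓ_{M',λ}(x)^{1−α} dx ≤ (α−1)⁻¹·ln( (α/(2α−1))·exp((α−1)·ε) + ((α−1)/(2α−1))·exp(−α·ε) ). -/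

import Mathlib

/-!
After the substitution `u = (x - M) / λ`, the integrand `ℓ_{M,λ}^α ℓ_{M',λ}^{1-α}` becomes
`ℓ_{0,1}^α ℓ_{s,1}^{1-α}` with `s = (M' - M) / λ`, a piecewise exponential in `u`. Integrating
it over `(-∞, 0]`, `(0, s]` and `(s, ∞)` (for `s ≥ 0`; the case `s < 0` follows by `u ↦ -u`) gives
`A(|s|)` with `A(s) = α/(2α-1) e^{(α-1)s} + (α-1)/(2α-1) e^{-αs}`, and `A' ≥ 0` on `[0, ∞)`.
Adding a label moves the clipped mean by `(M - clamp y_{n+1}) / (n + 1)`, which is at most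
`2m / (n + 1) = λ ε` in absolute value, so `|s| ≤ ε` and `A(|s|) ≤ A(ε)`.
-/

open MeasureTheory Real Finset

/-- Laplace density with location `m` and scale `lam`. -/
noncomputable def laplacePDF (m lam x : ℝ) : ℝ :=
  (1 / (2 * lam)) * Real.exp (-|x - m| / lam)

open Set

/-- `∫ ℓ_{0,1}^α ℓ_{s,1}^{1-α}` for `s ≥ 0`, i.e. `exp ((α - 1) D_α(Lap(0, 1) ‖ Lap(s, 1)))`. -/
noncomputable def laplaceRenyiMoment (α s : ℝ) : ℝ :=
  α / (2 * α - 1) * Real.exp ((α - 1) * s) + (α - 1) / (2 * α - 1) * Real.exp (-α * s)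

/-- `2 ℓ_{0,1}(u)^α ℓ_{s,1}(u)^{1-α}`. -/
noncomputable def laplaceTilted (α s u : ℝ) : ℝ :=
  Real.exp (-(α * |u| + (1 - α) * |u - s|))

section LaplaceTilted

variable {α s : ℝ}

lemma laplaceTilted_neg (α s u : ℝ) : laplaceTilted α s (-u) = laplaceTilted α (-s) u := by
  rw [laplaceTilted, laplaceTilted, abs_neg, ← abs_neg (-u - s)]
  ring_nf

lemma continuous_laplaceTilted (α s : ℝ) : Continuous (laplaceTilted α s) := by
  unfold laplaceTilted
  fun_prop

lemma laplaceTilted_of_nonpos (hs : 0 ≤ s) {u : ℝ} (hu : u ≤ 0) :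
    laplaceTilted α s u = exp ((α - 1) * s) * exp u := by
  rw [laplaceTilted, ← exp_add, abs_of_nonpos hu, abs_of_nonpos (by linarith)]
  ring_nf

lemma laplaceTilted_of_nonneg_of_le {u : ℝ} (hu : 0 ≤ u) (hus : u ≤ s) :
    laplaceTilted α s u = exp ((α - 1) * s) * exp (-((2 * α - 1) * u)) := by
  rw [laplaceTilted, ← exp_add, abs_of_nonneg hu, abs_of_nonpos (by linarith)]
  ring_nf

lemma laplaceTilted_of_le (hs : 0 ≤ s) {u : ℝ} (hsu : s ≤ u) :
    laplaceTilted α s u = exp ((1 - α) * s) * exp (-u) := by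
  rw [laplaceTilted, ← exp_add, abs_of_nonneg (by linarith), abs_of_nonneg (by linarith)]
  ring_nf

lemma integrableOn_Iic_laplaceTilted (hs : 0 ≤ s) : IntegrableOn (laplaceTilted α s) (Iic 0) :=
  IntegrableOn.congr_fun ((integrableOn_exp_Iic 0).const_mul _)
    (fun _ hu => (laplaceTilted_of_nonpos hs hu).symm) measurableSet_Iic

lemma integrableOn_Ioi_laplaceTilted (hs : 0 ≤ s) : IntegrableOn (laplaceTilted α s) (Ioi s) :=
  IntegrableOn.congr_fun ((integrableOn_exp_neg_Ioi s).const_mul _)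
    (fun _ hu => (laplaceTilted_of_le hs hu.le).symm) measurableSet_Ioi

lemma setIntegral_Iic_laplaceTilted (hs : 0 ≤ s) :
    ∫ u in Iic 0, laplaceTilted α s u = exp ((α - 1) * s) := by
  rw [setIntegral_congr_fun measurableSet_Iic fun _ hu => laplaceTilted_of_nonpos hs hu,
    integral_const_mul, integral_exp_Iic_zero, mul_one]

lemma setIntegral_Ioi_laplaceTilted (hs : 0 ≤ s) :
    ∫ u in Ioi s, laplaceTilted α s u = exp (-α * s) := by
  rw [setIntegral_congr_fun measurableSet_Ioi fun _ hu => laplaceTilted_of_le hs hu.le,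
    integral_const_mul, integral_exp_neg_Ioi, ← exp_add]
  ring_nf

lemma setIntegral_Ioc_laplaceTilted (hα : 1 < α) (hs : 0 ≤ s) :
    ∫ u in Ioc 0 s, laplaceTilted α s u =
      (exp ((α - 1) * s) - exp (-α * s)) / (2 * α - 1) := by
  have hk : 2 * α - 1 ≠ 0 := by linarith
  rw [setIntegral_congr_fun measurableSet_Ioc
      fun _ hu => laplaceTilted_of_nonneg_of_le hu.1.le hu.2,
    ← intervalIntegral.integral_of_le hs, intervalIntegral.integral_const_mul]
  simp_rw [show ∀ u, -((2 * α - 1) * u) = u * -(2 * α - 1) by intro u; ring]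
  rw [intervalIntegral.integral_comp_mul_right exp (neg_ne_zero.mpr hk), integral_exp,
    zero_mul, exp_zero, smul_eq_mul]
  have : exp ((α - 1) * s) * exp (s * -(2 * α - 1)) = exp (-α * s) := by
    rw [← exp_add]; ring_nf
  rw [div_eq_mul_inv, inv_neg, ← this]
  ring

lemma integral_laplaceTilted_of_nonneg (hα : 1 < α) (hs : 0 ≤ s) :
    ∫ u, laplaceTilted α s u = 2 * laplaceRenyiMoment α s := by
  have hIoc : IntegrableOn (laplaceTilted α s) (Ioc 0 s) :=
    (continuous_laplaceTilted α s).integrableOn_Ioc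
  have hIoi : IntegrableOn (laplaceTilted α s) (Ioi 0) := by
    rw [← Ioc_union_Ioi_eq_Ioi hs]
    exact hIoc.union (integrableOn_Ioi_laplaceTilted hs)
  rw [← intervalIntegral.integral_Iic_add_Ioi (integrableOn_Iic_laplaceTilted hs) hIoi,
    ← Ioc_union_Ioi_eq_Ioi hs, setIntegral_union (Ioc_disjoint_Ioi le_rfl) measurableSet_Ioi hIoc
      (integrableOn_Ioi_laplaceTilted hs), setIntegral_Iic_laplaceTilted hs,
    setIntegral_Ioc_laplaceTilted hα hs, setIntegral_Ioi_laplaceTilted hs, laplaceRenyiMoment]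
  set k := 2 * α - 1 with hk
  have : k ≠ 0 := by linarith
  field_simp
  linear_combination (exp ((α - 1) * s) + exp (-α * s)) * hk

lemma integral_laplaceTilted (hα : 1 < α) (s : ℝ) :
    ∫ u, laplaceTilted α s u = 2 * laplaceRenyiMoment α |s| := by
  rcases le_total 0 s with hs | hs
  · rw [abs_of_nonneg hs, integral_laplaceTilted_of_nonneg hα hs]
  · rw [abs_of_nonpos hs, ← integral_laplaceTilted_of_nonneg hα (neg_nonneg.mpr hs),
      ← integral_neg_eq_self]
    simp_rw [laplaceTilted_neg]

end LaplaceTilted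

lemma mul_exp_rpow_mul_mul_exp_rpow {c : ℝ} (hc : 0 < c) (a b α : ℝ) :
    (c * exp a) ^ α * (c * exp b) ^ (1 - α) = c * exp (α * a + (1 - α) * b) := by
  rw [mul_rpow hc.le (exp_pos a).le, mul_rpow hc.le (exp_pos b).le, ← exp_mul, ← exp_mul,
    mul_mul_mul_comm, ← rpow_add hc, add_sub_cancel, rpow_one, ← exp_add, mul_comm a,
    mul_comm b]

lemma laplacePDF_rpow_mul_rpow {lam : ℝ} (hlam : 0 < lam) (α a b x : ℝ) :
    laplacePDF a lam x ^ α * laplacePDF b lam x ^ (1 - α) =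
      laplaceTilted α ((b - a) / lam) ((x - a) / lam) / (2 * lam) := by
  rw [laplacePDF, laplacePDF, mul_exp_rpow_mul_mul_exp_rpow (by positivity), laplaceTilted,
    ← sub_div, sub_sub_sub_cancel_right, abs_div, abs_div, abs_of_pos hlam]
  ring_nf

lemma integral_laplacePDF_rpow_mul_rpow {lam α : ℝ} (hlam : 0 < lam) (hα : 1 < α) (a b : ℝ) :
    ∫ x, laplacePDF a lam x ^ α * laplacePDF b lam x ^ (1 - α) =
      laplaceRenyiMoment α (|b - a| / lam) := by
  set g := laplaceTilted α ((b - a) / lam)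
  simp_rw [laplacePDF_rpow_mul_rpow hlam, integral_div]
  rw [integral_sub_right_eq_self (fun x => g (x / lam)) a, Measure.integral_comp_div g lam,
    integral_laplaceTilted hα, abs_div, abs_of_pos hlam, smul_eq_mul]
  field_simp

section LaplaceRenyiMoment

variable {α : ℝ}

lemma laplaceRenyiMoment_pos (hα : 1 < α) (s : ℝ) : 0 < laplaceRenyiMoment α s := by
  have : 0 < 2 * α - 1 := by linarith
  have : 0 < α - 1 := by linarith
  unfold laplaceRenyiMoment
  positivity

lemma hasDerivAt_laplaceRenyiMoment (α s : ℝ) :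
    HasDerivAt (laplaceRenyiMoment α)
      (α * (α - 1) / (2 * α - 1) * (exp ((α - 1) * s) - exp (-α * s))) s := by
  have hpos := (((hasDerivAt_id s).const_mul (α - 1)).exp).const_mul (α / (2 * α - 1))
  have hneg := (((hasDerivAt_id s).const_mul (-α)).exp).const_mul ((α - 1) / (2 * α - 1))
  exact (hpos.add hneg).congr_deriv (by simp only [id]; ring)

lemma laplaceRenyiMoment_monotoneOn (hα : 1 < α) : MonotoneOn (laplaceRenyiMoment α) (Ici 0) := by
  refine monotoneOn_of_deriv_nonneg (convex_Ici 0)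
    (fun s _ => (hasDerivAt_laplaceRenyiMoment α s).continuousAt.continuousWithinAt)
    (fun s _ => (hasDerivAt_laplaceRenyiMoment α s).differentiableAt.differentiableWithinAt)
    fun s hs => ?_
  rw [interior_Ici, Set.mem_Ioi] at hs
  rw [(hasDerivAt_laplaceRenyiMoment α s).deriv]
  have hcoeff : 0 ≤ α * (α - 1) / (2 * α - 1) := by
    apply div_nonneg <;> nlinarith
  exact mul_nonneg hcoeff (sub_nonneg.mpr (exp_le_exp.mpr (by nlinarith)))

end LaplaceRenyiMoment

lemma abs_clamp_le {m : ℝ} (hm : 0 ≤ m) (y : ℝ) : |max (-m) (min y m)| ≤ m :=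
  abs_le.mpr ⟨le_max_left _ _, max_le (by linarith) (min_le_right _ _)⟩

section Mean

variable {c : ℕ → ℝ} {m : ℝ}

lemma abs_mean_le (hc : ∀ i, |c i| ≤ m) (n : ℕ) :
    |(1 / (n : ℝ)) * ∑ i ∈ range n, c i| ≤ m := by
  rcases n.eq_zero_or_pos with rfl | hn
  · simpa using (abs_nonneg _).trans (hc 0)
  rw [abs_mul, abs_of_pos (by positivity), one_div_mul_eq_div, div_le_iff₀ (by positivity)]
  calc |∑ i ∈ range n, c i| ≤ ∑ i ∈ range n, |c i| := abs_sum_le_sum_abs _ _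
    _ ≤ ∑ _i ∈ range n, m := sum_le_sum fun i _ => hc i
    _ = m * n := by rw [sum_const, card_range, nsmul_eq_mul, mul_comm]

/-- At `n = 0` the first mean is `0` (as `1 / 0 = 0`), and the bound still holds. -/
lemma abs_mean_sub_mean_succ_le (hc : ∀ i, |c i| ≤ m) (n : ℕ) :
    |(1 / (n : ℝ)) * ∑ i ∈ range n, c i - (1 / ((n : ℝ) + 1)) * ∑ i ∈ range (n + 1), c i| ≤
      2 * m / ((n : ℝ) + 1) := by
  set M := (1 / (n : ℝ)) * ∑ i ∈ range n, c i
  have hsucc : (1 / ((n : ℝ) + 1)) * ∑ i ∈ range (n + 1), c i = (n * M + c n) / (n + 1) := by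
    rcases n.eq_zero_or_pos with rfl | hn
    · simp
    rw [sum_range_succ]
    simp only [M]
    field_simp
  rw [hsucc, show M - (n * M + c n) / (n + 1) = (M - c n) / (n + 1) by field_simp; ring,
    abs_div, abs_of_pos (a := (n : ℝ) + 1) (by positivity)]
  gcongr
  calc |M - c n| ≤ |M| + |c n| := abs_sub _ _
    _ ≤ 2 * m := by linarith [abs_mean_le hc n, hc n]

end Mean

theorem dp_init_score_rdp_general (n : ℕ) (m ε α : ℝ)
    (hm : 0 < m) (hε : 0 < ε) (hα : 1 < α) (y : ℕ → ℝ) :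
    (α - 1)⁻¹ * Real.log (∫ x : ℝ,
        laplacePDF ((1 / (n : ℝ)) * ∑ i ∈ Finset.range n, max (-m) (min (y i) m))
          (2 * m / (((n : ℝ) + 1) * ε)) x ^ α *
        laplacePDF ((1 / ((n : ℝ) + 1)) * ∑ i ∈ Finset.range (n + 1), max (-m) (min (y i) m))
          (2 * m / (((n : ℝ) + 1) * ε)) x ^ (1 - α)) ≤
      (α - 1)⁻¹ * Real.log ((α / (2 * α - 1)) * Real.exp ((α - 1) * ε) +
        ((α - 1) / (2 * α - 1)) * Real.exp (-α * ε)) := by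
  set lam := 2 * m / (((n : ℝ) + 1) * ε)
  have hlam : 0 < lam := by positivity
  rw [integral_laplacePDF_rpow_mul_rpow hlam hα]
  have hshift : |(1 / ((n : ℝ) + 1)) * ∑ i ∈ range (n + 1), max (-m) (min (y i) m) -
      (1 / (n : ℝ)) * ∑ i ∈ range n, max (-m) (min (y i) m)| / lam ≤ ε := by
    rw [div_le_iff₀ hlam, abs_sub_comm]
    calc _ ≤ 2 * m / ((n : ℝ) + 1) := abs_mean_sub_mean_succ_le (fun i => abs_clamp_le hm.le _) n
      _ = ε * lam := by simp only [lam]; field_simp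
  refine mul_le_mul_of_nonneg_left (log_le_log (laplaceRenyiMoment_pos hα _) ?_)
    (inv_nonneg.mpr (sub_nonneg.mpr hα.le))
  exact laplaceRenyiMoment_monotoneOn hα (Set.mem_Ici.mpr (by positivity)) hε.le hshift

theorem dp_init_score_rdp (n : ℕ) (hn : 1 ≤ n) (m ε α : ℝ)
    (hm : 0 < m) (hε : 0 < ε) (hα : 1 < α) (y : ℕ → ℝ) :
    (α - 1)⁻¹ * Real.log (∫ x : ℝ,
        laplacePDF ((1 / (n : ℝ)) * ∑ i ∈ Finset.range n, max (-m) (min (y i) m))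
          (2 * m / (((n : ℝ) + 1) * ε)) x ^ α *
        laplacePDF ((1 / ((n : ℝ) + 1)) * ∑ i ∈ Finset.range (n + 1), max (-m) (min (y i) m))
          (2 * m / (((n : ℝ) + 1) * ε)) x ^ (1 - α)) ≤
      (α - 1)⁻¹ * Real.log ((α / (2 * α - 1)) * Real.exp ((α - 1) * ε) +
        ((α - 1) / (2 * α - 1)) * Real.exp (-α * ε)) :=
  dp_init_score_rdp_general n m ε α hm hε hα y
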